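/- (Iyer's formula, generalized) For every semicoherent structure function φ and every j ∈ [n], ℙ(T = X_j) = Σ_{A ⊆ [n]\{j}} r_j(A)·m_φ(A∪{j}). -/

import Mathlib

open MeasureTheory ProbabilityTheory Finset

/-!
Let `D(ω) = {i | X_j(ω) < X_i(ω)}` be the random set of components that outlive `j`. Since `T ≥ t`
iff `φ {i | X_i ≥ t} = 1` and `T > t` iff `φ {i | X_i > t} = 1`, off the null set of ties
`T = X_j` holds exactly when `φ (D ∪ {j}) = 1` and `φ D = 0`; hence
`ℙ(T = X_j) = ∑_C ℙ(D = C) (φ (C ∪ {j}) - φ C)`. On the other side `r_j(A) = ℙ(A ⊆ D)` is the sum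
of `ℙ(D = C)` over `C ⊇ A`, and exchanging the sums leaves `∑_{A ⊆ C} m_φ(A ∪ {j})`, which is
`φ (C ∪ {j}) - φ C` by Möbius inversion on the Boolean lattice.
-/

namespace Finset

variable {α R : Type*} [DecidableEq α] [Ring R]

def moebiusTransform (f : Finset α → R) (A : Finset α) : R :=
  ∑ B ∈ A.powerset, (-1) ^ (#A - #B) * f B

theorem sum_Icc_neg_one_pow_card_sub {B C : Finset α} (h : B ⊆ C) :
    ∑ A ∈ Icc B C, (-1 : R) ^ (#A - #B) = if B = C then 1 else 0 := by
  have hBC : C \ B = ∅ ↔ B = C := by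
    rw [sdiff_eq_empty_iff_subset]; exact ⟨fun h' => h.antisymm h', fun h' => h' ▸ subset_rfl⟩
  have hsum : ∑ D ∈ (C \ B).powerset, (-1 : R) ^ #D = if B = C then 1 else 0 := by
    have := sum_powerset_neg_one_pow_card (x := C \ B)
    simp only [hBC] at this
    split_ifs at this ⊢ <;> simpa using congrArg (Int.cast (R := R)) this
  have hdisj : ∀ D ∈ (C \ B).powerset, Disjoint B D := fun D hD =>
    disjoint_of_subset_right (mem_powerset.1 hD) disjoint_sdiff
  rw [Icc_eq_image_powerset h, sum_image, ← hsum]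
  · refine sum_congr rfl fun D hD => ?_
    rw [card_union_of_disjoint (hdisj D hD), Nat.add_sub_cancel_left]
  · intro D hD E hE hDE
    rw [← union_sdiff_cancel_left (hdisj D hD), ← union_sdiff_cancel_left (hdisj E hE)]
    exact congrArg (· \ B) hDE

theorem sum_powerset_moebiusTransform (f : Finset α → R) (C : Finset α) :
    ∑ A ∈ C.powerset, moebiusTransform f A = f C := by
  unfold moebiusTransform
  rw [sum_comm' (t' := C.powerset) (s' := fun B => Icc B C) (fun A B => ?_)]
  · simp_rw [← sum_mul]
    rw [sum_congr rfl fun B hB => by rw [sum_Icc_neg_one_pow_card_sub (mem_powerset.1 hB)]]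
    simp
  · simp only [mem_powerset, mem_Icc]
    constructor
    · rintro ⟨hAC, hBA⟩; exact ⟨⟨hBA, hAC⟩, hBA.trans hAC⟩
    · rintro ⟨⟨hBA, hAC⟩, -⟩; exact ⟨hAC, hBA⟩

theorem sum_powerset_moebiusTransform_insert (f : Finset α → R) {j : α} {C : Finset α}
    (hj : j ∉ C) :
    ∑ A ∈ C.powerset, moebiusTransform f (insert j A) = f (insert j C) - f C := by
  rw [eq_sub_iff_add_eq', ← sum_powerset_moebiusTransform f C, ← sum_powerset_insert hj,
    sum_powerset_moebiusTransform]

theorem sum_powerset_sum_supset_mul_moebiusTransform_insert (p f : Finset α → R) {j : α}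
    {U : Finset α} (hj : j ∉ U) :
    ∑ A ∈ U.powerset, (∑ C ∈ U.powerset with A ⊆ C, p C) * moebiusTransform f (insert j A)
      = ∑ C ∈ U.powerset, p C * (f (insert j C) - f C) := by
  simp_rw [sum_mul]
  rw [sum_comm' (t' := U.powerset) (s' := powerset) (fun A C => ?_)]
  · refine sum_congr rfl fun C hC => ?_
    rw [← mul_sum, sum_powerset_moebiusTransform_insert f (fun h => hj (mem_powerset.1 hC h))]
  · simp only [mem_powerset, mem_filter]
    exact ⟨fun ⟨_, hCU, hAC⟩ => ⟨hAC, hCU⟩, fun ⟨hAC, hCU⟩ => ⟨hAC.trans hCU, hCU, hAC⟩⟩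

end Finset

section Lifetime

variable {ι : Type*} [Fintype ι]

noncomputable def lifetime (P : Finset ι → Prop) (x : ι → ℝ) : EReal :=
  ⨆ (A : Finset ι) (_ : P A), ⨅ i ∈ A, (x i : EReal)

noncomputable def outlivers (x : ι → ℝ) (j : ι) : Finset ι := {i | x j < x i}

variable {P : Finset ι → Prop} {x : ι → ℝ}

theorem lifetime_eq_sup [DecidablePred P] :
    lifetime P x = (univ.filter P).sup fun A => A.inf fun i => (x i : EReal) := by
  simp [lifetime, Finset.sup_eq_iSup, Finset.inf_eq_iInf]

theorem coe_le_lifetime_iff {t : ℝ} : (t : EReal) ≤ lifetime P x ↔ ∃ A, P A ∧ ∀ i ∈ A, t ≤ x i := by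
  classical
  simp [lifetime_eq_sup, Finset.le_sup_iff (EReal.bot_lt_coe t)]

theorem coe_lt_lifetime_iff {t : ℝ} : (t : EReal) < lifetime P x ↔ ∃ A, P A ∧ ∀ i ∈ A, t < x i := by
  classical
  simp [lifetime_eq_sup, Finset.lt_sup_iff, Finset.lt_inf_iff (EReal.coe_lt_top t)]

theorem coe_le_lifetime_iff_of_isUpperSet (hP : IsUpperSet {A | P A}) {t : ℝ} :
    (t : EReal) ≤ lifetime P x ↔ P {i | t ≤ x i} := by
  rw [coe_le_lifetime_iff]
  exact ⟨fun ⟨A, hA, hAt⟩ => hP (fun i hi => by simpa using hAt i hi) hA,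
    fun h => ⟨_, h, fun i hi => by simpa using hi⟩⟩

theorem coe_lt_lifetime_iff_of_isUpperSet (hP : IsUpperSet {A | P A}) {t : ℝ} :
    (t : EReal) < lifetime P x ↔ P {i | t < x i} := by
  rw [coe_lt_lifetime_iff]
  exact ⟨fun ⟨A, hA, hAt⟩ => hP (fun i hi => by simpa using hAt i hi) hA,
    fun h => ⟨_, h, fun i hi => by simpa using hi⟩⟩

theorem lifetime_eq_coe_iff [DecidableEq ι] (hP : IsUpperSet {A | P A}) {j : ι}
    (hx : ∀ i ≠ j, x i ≠ x j) :
    lifetime P x = x j ↔ P (insert j (outlivers x j)) ∧ ¬ P (outlivers x j) := by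
  have hle : ({i | x j ≤ x i} : Finset ι) = insert j (outlivers x j) := by
    ext i
    by_cases hij : i = j
    · simp [hij]
    · simp [outlivers, hij, le_iff_lt_or_eq, Ne.symm (hx i hij)]
  rw [eq_comm, eq_iff_le_not_lt, coe_le_lifetime_iff_of_isUpperSet hP,
    coe_lt_lifetime_iff_of_isUpperSet hP, hle]
  rfl

theorem outlivers_mem_powerset_erase [DecidableEq ι] (x : ι → ℝ) (j : ι) :
    outlivers x j ∈ (univ.erase j).powerset := by
  simp only [outlivers, mem_powerset, subset_iff, mem_filter, mem_erase]
  exact fun i hi => ⟨fun hij => lt_irrefl _ (hij ▸ hi.2), hi.1⟩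

end Lifetime

section Probability

variable {Ω ι : Type*} [MeasurableSpace Ω] {μ : Measure Ω} [IsFiniteMeasure μ]

theorem measureReal_setOf_comp_eq_sum_filter {β : Type*} [MeasurableSpace β]
    [MeasurableSingletonClass β] {D : Ω → β} (hD : Measurable D) {s : Finset β}
    (hs : ∀ ω, D ω ∈ s) (q : β → Prop) [DecidablePred q] :
    μ.real {ω | q (D ω)} = ∑ b ∈ s with q b, μ.real {ω | D ω = b} := by
  calc μ.real {ω | q (D ω)} = μ.real (D ⁻¹' ↑{b ∈ s | q b}) := by
        congr 1
        ext ω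
        simp [hs ω]
    _ = _ := (sum_measureReal_preimage_singleton _ fun b _ => hD (measurableSet_singleton b)).symm

variable [Fintype ι] {X : ι → Ω → ℝ}

theorem measurable_outlivers (hX : ∀ i, Measurable (X i)) (j : ι) :
    Measurable fun ω => outlivers (X · ω) j := by
  refine measurable_finset_iff.2 fun i => ?_
  simpa [outlivers] using measurableSet_setOfPred.1 (measurableSet_lt (hX j) (hX i))

variable [DecidableEq ι]

theorem measureReal_forall_lt_eq_sum (hX : ∀ i, Measurable (X i)) (j : ι) (A : Finset ι) :
    μ.real {ω | ∀ i ∈ A, X j ω < X i ω}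
      = ∑ C ∈ (univ.erase j).powerset with A ⊆ C, μ.real {ω | outlivers (X · ω) j = C} := by
  rw [← measureReal_setOf_comp_eq_sum_filter (measurable_outlivers hX j)
    fun ω => outlivers_mem_powerset_erase _ j]
  simp [outlivers, subset_iff]

theorem measureReal_lifetime_eq_sum (hX : ∀ i, Measurable (X i))
    {j : ι} (hties : ∀ i ≠ j, μ {ω | X i ω = X j ω} = 0)
    {P : Finset ι → Prop} [DecidablePred P] (hP : IsUpperSet {A | P A}) :
    μ.real {ω | lifetime P (X · ω) = X j ω}
      = ∑ C ∈ (univ.erase j).powerset with P (insert j C) ∧ ¬ P C,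
          μ.real {ω | outlivers (X · ω) j = C} := by
  have hae : ∀ᵐ ω ∂μ, ∀ i ≠ j, X i ω ≠ X j ω := by
    refine ae_all_iff.2 fun i => ?_
    by_cases hij : i = j
    · simp [hij]
    · exact (measure_eq_zero_iff_ae_notMem.1 (hties i hij)).mono fun ω hω _ => hω
  rw [← measureReal_setOf_comp_eq_sum_filter (measurable_outlivers hX j)
    fun ω => outlivers_mem_powerset_erase _ j]
  refine measureReal_congr (hae.mono fun ω hω => ?_)
  exact propext (lifetime_eq_coe_iff hP hω)

end Probability

theorem barlow_proschan_stmt_7_general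
    {Ω : Type*} [MeasureSpace Ω] [IsProbabilityMeasure (ℙ : Measure Ω)]
    {n : ℕ} (X : Fin n → Ω → ℝ) (hX : ∀ i, Measurable (X i))
    (hties : ∀ i j : Fin n, i ≠ j → (ℙ : Measure Ω) {ω | X i ω = X j ω} = 0)
    (φ : Finset (Fin n) → ℕ) (hφ01 : ∀ A, φ A ≤ 1)
    (hmono : ∀ ⦃A B : Finset (Fin n)⦄, A ⊆ B → φ A ≤ φ B)
    (j : Fin n) :
    ((ℙ : Measure Ω) {ω |
        (⨆ (A : Finset (Fin n)) (_ : φ A = 1), ⨅ i ∈ A, (X i ω : EReal))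
          = (X j ω : EReal)}).toReal
      = ∑ A ∈ (Finset.univ.erase j).powerset,
          ((ℙ : Measure Ω) {ω | ∀ i ∈ A, X j ω < X i ω}).toReal
            * ∑ B ∈ (insert j A).powerset,
                (-1 : ℝ) ^ ((insert j A).card - B.card) * (φ B : ℝ) := by
  have hP : IsUpperSet {A : Finset (Fin n) | φ A = 1} := fun A B hAB hA =>
    le_antisymm (hφ01 B) (hA ▸ hmono hAB)
  simp_rw [← measureReal_def]
  change (ℙ : Measure Ω).real {ω | lifetime (φ · = 1) (X · ω) = X j ω}
    = ∑ A ∈ _, _ * moebiusTransform (fun B => (φ B : ℝ)) (insert j A)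
  rw [measureReal_lifetime_eq_sum hX (fun i hij => hties i j hij) hP]
  simp_rw [measureReal_forall_lt_eq_sum hX j]
  rw [sum_powerset_sum_supset_mul_moebiusTransform_insert _ _ (notMem_erase j univ), sum_filter]
  refine sum_congr rfl fun C _ => ?_
  have hle := hmono (subset_insert j C)
  have hC := hφ01 C
  split_ifs with h
  · rw [h.1, show φ C = 0 by omega]
    simp
  · rw [show φ (insert j C) = φ C by have := hφ01 (insert j C); omega]
    simp

theorem barlow_proschan_stmt_7
    {Ω : Type*} [MeasureSpace Ω] [IsProbabilityMeasure (ℙ : Measure Ω)]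
    {n : ℕ} (X : Fin n → Ω → ℝ) (hX : ∀ i, Measurable (X i))
    (hties : ∀ i j : Fin n, i ≠ j → (ℙ : Measure Ω) {ω | X i ω = X j ω} = 0)
    (φ : Finset (Fin n) → ℕ) (hφ01 : ∀ A, φ A ≤ 1)
    (hmono : ∀ ⦃A B : Finset (Fin n)⦄, A ⊆ B → φ A ≤ φ B)
    (hempty : φ ∅ = 0) (hfull : φ Finset.univ = 1)
    (j : Fin n) :
    ((ℙ : Measure Ω) {ω |
        (⨆ (A : Finset (Fin n)) (_ : φ A = 1), ⨅ i ∈ A, (X i ω : EReal))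
          = (X j ω : EReal)}).toReal
      = ∑ A ∈ (Finset.univ.erase j).powerset,
          ((ℙ : Measure Ω) {ω | ∀ i ∈ A, X j ω < X i ω}).toReal
            * ∑ B ∈ (insert j A).powerset,
                (-1 : ℝ) ^ ((insert j A).card - B.card) * (φ B : ℝ) :=
  barlow_proschan_stmt_7_general X hX hties φ hφ01 hmono j
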